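/- Let λ be a cardinal of countable cofinality, 𝒟 a strong covering matrix on λ⁺, θ sufficiently large, and M ≺ H_θ an ℵ₁-internally unbounded model of size ℵ₁ with 𝒟 ∈ M. Then there is n < ω such that D(m, sup(M ∩ λ⁺)) ∩ x ∈ M for all x ∈ P_{ω₁}(λ⁺) ∩ M and all m ≥ n. -/

import Mathlib

open Cardinal

namespace GuessingModels

/-- First-order formulas in the language of set theory (membership and equality),
with `n` free variables. -/
inductive SF : ℕ → Type
  | mem {n} (i j : Fin n) : SF n
  | eq {n} (i j : Fin n) : SF n
  | imp {n} (f g : SF n) : SF n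
  | not {n} (f : SF n) : SF n
  | ex {n} (f : SF (n + 1)) : SF n

/-- Tarskian satisfaction of a set-theoretic formula in the structure `⟨S, ∈⟩`,
where `S` is a class of ZF sets. -/
def Realize (S : Set ZFSet) : ∀ {n}, SF n → (Fin n → ZFSet) → Prop
  | _, .mem i j, v => v i ∈ v j
  | _, .eq i j, v => v i = v j
  | _, .imp f g, v => Realize S f v → Realize S g v
  | _, .not f, v => ¬ Realize S f v
  | _, .ex f, v => ∃ x ∈ S, Realize S f (Fin.cons x v)

/-- `M ≺ R` : `M` is an elementary substructure of `⟨R, ∈⟩`. -/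
def Prec (M R : Set ZFSet) : Prop :=
  M ⊆ R ∧ ∀ {n : ℕ} (φ : SF n) (v : Fin n → ZFSet), (∀ i, v i ∈ M) →
    (Realize M φ v ↔ Realize R φ v)

/-- A (von Neumann) ordinal: a transitive set of transitive sets. -/
def IsOrd (x : ZFSet) : Prop :=
  x.IsTransitive ∧ ∀ y ∈ x, ZFSet.IsTransitive y

/-- `≤` on ordinals, i.e. `∈` or `=`. -/
def ole (a b : ZFSet) : Prop := a ∈ b ∨ a = b

/-- The cardinality of (the extension of) a ZF set. -/
noncomputable def card (x : ZFSet) : Cardinal := Cardinal.mk x.toSet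

/-- A ZF set which is a cardinal: an ordinal not equinumerous with any of its members. -/
def IsCard (κ : ZFSet) : Prop := IsOrd κ ∧ ∀ β ∈ κ, card β < card κ

/-- `s` (an external class) is a cofinal subset of the ordinal `κ`. -/
def CofinalSetIn (s : Set ZFSet) (κ : ZFSet) : Prop :=
  (∀ x ∈ s, x ∈ κ) ∧ ∀ β ∈ κ, ∃ γ ∈ s, ole β γ

/-- A regular cardinal: an infinite cardinal all of whose cofinal subsets have full size. -/
def IsRegCard (κ : ZFSet) : Prop :=
  IsCard κ ∧ ZFSet.omega ⊆ κ ∧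
    ∀ s : Set ZFSet, CofinalSetIn s κ → Cardinal.mk s = card κ

/-- A strong limit ZF cardinal. -/
def IsStrongLimit (κ : ZFSet) : Prop := ∀ β ∈ κ, (2 : Cardinal) ^ card β < card κ

/-- A strongly inaccessible cardinal: regular, uncountable and strong limit. -/
def IsInacc (κ : ZFSet) : Prop := IsRegCard κ ∧ ZFSet.omega ∈ κ ∧ IsStrongLimit κ

/-- The transitive closure of a ZF set, as a class. -/
def tcl (x : ZFSet) : Set ZFSet := {y | Relation.TransGen (· ∈ ·) y x}

/-- `H_θ` : the class of sets hereditarily of size `< θ`. -/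
noncomputable def HSet (θ : ZFSet) : Set ZFSet := {x | Cardinal.mk (tcl x) < card θ}

/-- `V_α` as a class, for `α` an ordinal (as a ZF set): sets of rank `< α`. -/
noncomputable def VSet (α : ZFSet) : Set ZFSet := {x | x.rank < α.rank}

/-- A suitable initial segment: `H_θ` for a regular cardinal `θ`, or a rank initial
segment `V_α`. -/
def Suitable (R : Set ZFSet) : Prop :=
  (∃ θ : ZFSet, IsRegCard θ ∧ R = HSet θ) ∨ (∃ α : ZFSet, IsOrd α ∧ R = VSet α)

/-- `κ = κ_M` : `κ` is the least ordinal in `M` with `M ∩ κ ≠ κ`. -/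
def KappaSpec (M : Set ZFSet) (κ : ZFSet) : Prop :=
  IsOrd κ ∧ κ ∈ M ∧ (∃ β ∈ κ, β ∉ M) ∧
    ∀ α : ZFSet, IsOrd α → α ∈ M → (∃ β ∈ α, β ∉ M) → ole κ α

/-- `d` is `(δ, M)`-approximated: `d ∩ Z ∈ M` for every `Z ∈ M` of size `< δ`. -/
noncomputable def Approx (M : Set ZFSet) (δ : Cardinal.{1}) (d : ZFSet) : Prop :=
  ∀ Z : ZFSet, Z ∈ M → card Z < δ → (d ∩ Z) ∈ M

/-- `d ⊆ X` is `M`-guessed: `d ∩ M = e ∩ M` for some `e ∈ M ∩ P(X)`. -/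
def Guessed (M : Set ZFSet) (X d : ZFSet) : Prop :=
  ∃ e : ZFSet, e ∈ M ∧ e ⊆ X ∧ ∀ z ∈ M, (z ∈ e ↔ z ∈ d)

/-- `M` is a `δ`-guessing model: every `(δ,M)`-approximated subset of any `X ∈ M`
is `M`-guessed. -/
noncomputable def GuessingModel (M : Set ZFSet) (δ : Cardinal.{1}) : Prop :=
  ∀ X ∈ M, ∀ d : ZFSet, d ⊆ X → Approx M δ d → Guessed M X d

/-- `M` is `ℵ₁`-internally unbounded: every countable subset of `M` is contained
in a countable element of `M`. -/
noncomputable def IntUnb (M : Set ZFSet) : Prop :=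
  ∀ A : Set ZFSet, A ⊆ M → A.Countable → ∃ z ∈ M, card z ≤ ℵ₀ ∧ A ⊆ z.toSet

/-- The `n`-th von Neumann natural number as a ZF set. -/
def natZF : ℕ → ZFSet
  | 0 => ∅
  | n + 1 => insert (natZF n) (natZF n)

/-- Definition 7.5: a strong covering matrix on `λ⁺` (here `lamp`). -/
noncomputable def SCM (lam lamp : ZFSet) (D : ℕ → ZFSet → ZFSet) : Prop :=
  (∀ α, α ∈ lamp → (∀ n : ℕ, D n α ⊆ α) ∧ ∀ β ∈ α, ∃ n : ℕ, β ∈ D n α) ∧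
  (∀ α, α ∈ lamp → ∀ m n : ℕ, m ≤ n → D m α ⊆ D n α) ∧
  (∀ α, α ∈ lamp → ∀ α', α' ∈ lamp → α ∈ α' →
    ∃ n : ℕ, ∀ m : ℕ, n ≤ m → D m α ⊆ D m α') ∧
  (∀ x : ZFSet, x ⊆ lamp → card x ≤ ℵ₀ →
    ∃ γ, γ ∈ lamp ∧ ∀ α, α ∈ lamp → ole γ α →
      ∃ n : ℕ, ∀ m : ℕ, n ≤ m → D m α ∩ x = D m γ ∩ x) ∧
  (∀ α, α ∈ lamp → ∀ n : ℕ, card (D n α) < card lam)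

/-!
Suppose the conclusion fails: for every `n` there are a countable `xₙ ∈ M`, `xₙ ⊆ λ⁺`, and
`mₙ ≥ n` with `D(mₙ, σ) ∩ xₙ ∉ M`. Countable elements of `M` are subsets of `M`, so by internal
unboundedness all `xₙ` lie in a single countable `x ∈ M`, `x ⊆ λ⁺`. By elementarity the ordinal
`γ_x` of clause (iv) can be found in `M`; then `γ_x ≤ σ`, and `D(m, σ) ∩ x = D(m, γ_x) ∩ x` for
all large `m`. For large `n` this makes `D(mₙ, σ) ∩ xₙ = D(mₙ, γ_x) ∩ xₙ`, an element of `M`.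

Elementarity is only applied to `Δ₀` formulas. These are absolute between the transitive class
`H_θ` and the universe, so every formula is evaluated directly in `ZFSet`.
-/

namespace SF

variable {n : ℕ}

def and (φ ψ : SF n) : SF n := .not (.imp φ (.not ψ))
def or (φ ψ : SF n) : SF n := .imp (.not φ) ψ
def bex (i : Fin n) (φ : SF (n + 1)) : SF n := .ex ((SF.mem 0 i.succ).and φ)
def ball (i : Fin n) (φ : SF (n + 1)) : SF n := .not (.bex i (.not φ))

inductive IsBounded : ∀ {n : ℕ}, SF n → Prop
  | mem {n : ℕ} (i j : Fin n) : IsBounded (.mem i j)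
  | eq {n : ℕ} (i j : Fin n) : IsBounded (.eq i j)
  | imp {n : ℕ} {φ ψ : SF n} : IsBounded φ → IsBounded ψ → IsBounded (.imp φ ψ)
  | not {n : ℕ} {φ : SF n} : IsBounded φ → IsBounded (.not φ)
  | bex {n : ℕ} (i : Fin n) {φ : SF (n + 1)} : IsBounded φ → IsBounded (.bex i φ)

namespace IsBounded

variable {φ ψ : SF n}

theorem and (hφ : φ.IsBounded) (hψ : ψ.IsBounded) : (φ.and ψ).IsBounded :=
  .not (.imp hφ (.not hψ))

theorem or (hφ : φ.IsBounded) (hψ : ψ.IsBounded) : (φ.or ψ).IsBounded :=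
  .imp (.not hφ) hψ

theorem ball (i : Fin n) {φ : SF (n + 1)} (hφ : φ.IsBounded) : (SF.ball i φ).IsBounded :=
  .not (.bex i (.not hφ))

end IsBounded

end SF

section Realize

variable {S : Set ZFSet} {n : ℕ} {v : Fin n → ZFSet}

@[simp] theorem realize_mem {i j : Fin n} : Realize S (.mem i j) v ↔ v i ∈ v j := Iff.rfl
@[simp] theorem realize_eq {i j : Fin n} : Realize S (.eq i j) v ↔ v i = v j := Iff.rfl
@[simp] theorem realize_imp {φ ψ : SF n} :
    Realize S (.imp φ ψ) v ↔ (Realize S φ v → Realize S ψ v) := Iff.rfl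
@[simp] theorem realize_not {φ : SF n} : Realize S (.not φ) v ↔ ¬Realize S φ v := Iff.rfl
theorem realize_ex {φ : SF (n + 1)} :
    Realize S (.ex φ) v ↔ ∃ x ∈ S, Realize S φ (Matrix.vecCons x v) := Iff.rfl
@[simp] theorem realize_and {φ ψ : SF n} :
    Realize S (φ.and ψ) v ↔ Realize S φ v ∧ Realize S ψ v := by
  simp [SF.and]
@[simp] theorem realize_or {φ ψ : SF n} :
    Realize S (φ.or ψ) v ↔ Realize S φ v ∨ Realize S ψ v := by
  simp [SF.or, or_iff_not_imp_left]

theorem realize_bex {i : Fin n} {φ : SF (n + 1)} :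
    Realize S (.bex i φ) v ↔ ∃ x ∈ S, x ∈ v i ∧ Realize S φ (Matrix.vecCons x v) := by
  simp [SF.bex, realize_ex]

@[simp] theorem realize_univ_bex {i : Fin n} {φ : SF (n + 1)} :
    Realize Set.univ (.bex i φ) v ↔ ∃ x ∈ v i, Realize Set.univ φ (Matrix.vecCons x v) := by
  simp [realize_bex]

@[simp] theorem realize_univ_ball {i : Fin n} {φ : SF (n + 1)} :
    Realize Set.univ (.ball i φ) v ↔ ∀ x ∈ v i, Realize Set.univ φ (Matrix.vecCons x v) := by
  simp [SF.ball]

end Realize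

def IsTransClass (H : Set ZFSet) : Prop := ∀ x ∈ H, ∀ y ∈ x, y ∈ H

theorem IsTransClass.snd_mem {H : Set ZFSet} (hH : IsTransClass H) {a b : ZFSet}
    (h : ZFSet.pair a b ∈ H) : b ∈ H :=
  hH _ (hH _ h {a, b} (by simp [ZFSet.pair])) b (by simp)

theorem realize_iff_realize_univ {H : Set ZFSet} (hH : IsTransClass H) {n : ℕ} {φ : SF n}
    (hφ : φ.IsBounded) {v : Fin n → ZFSet} (hv : ∀ i, v i ∈ H) :
    Realize H φ v ↔ Realize Set.univ φ v := by
  induction hφ with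
  | mem | eq => rfl
  | imp _ _ ih₁ ih₂ => simp only [realize_imp, ih₁ hv, ih₂ hv]
  | not _ ih => simp only [realize_not, ih hv]
  | @bex n i φ _ ih =>
    rw [realize_bex, realize_univ_bex]
    refine exists_congr fun x => ?_
    by_cases hx : x ∈ v i
    · have hxH : x ∈ H := hH _ (hv i) x hx
      simp only [hx, hxH, true_and, ih (v := Matrix.vecCons x v) (Fin.cases hxH hv)]
    · simp [hx]

theorem mem_natZF {x : ZFSet} {n : ℕ} : x ∈ natZF n ↔ ∃ m < n, x = natZF m := by
  induction n with
  | zero => simp [natZF]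
  | succ k ih =>
    simp only [natZF, ZFSet.mem_insert_iff, ih, Nat.lt_succ_iff_lt_or_eq]
    constructor
    · rintro (rfl | ⟨m, hm, rfl⟩)
      exacts [⟨k, .inr rfl, rfl⟩, ⟨m, .inl hm, rfl⟩]
    · rintro ⟨m, hm | rfl, rfl⟩
      exacts [.inr ⟨m, hm, rfl⟩, .inl rfl]

theorem natZF_mem_natZF {m n : ℕ} (h : m < n) : natZF m ∈ natZF n :=
  mem_natZF.2 ⟨m, h, rfl⟩

theorem natZF_injective : Function.Injective natZF := by
  intro m n h
  by_contra hne
  rcases Nat.lt_or_gt_of_ne hne with hlt | hlt <;>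
    exact ZFSet.mem_irrefl _ (h ▸ natZF_mem_natZF hlt)

@[simp] theorem natZF_mem_natZF_iff {m n : ℕ} : natZF m ∈ natZF n ↔ m < n := by
  simp [mem_natZF, natZF_injective.eq_iff]

@[simp] theorem ole_natZF_iff {m n : ℕ} : ole (natZF m) (natZF n) ↔ m ≤ n := by
  simp [ole, natZF_injective.eq_iff, le_iff_lt_or_eq]

theorem mem_omega_iff {y : ZFSet} : y ∈ ZFSet.omega ↔ ∃ n, y = natZF n := by
  constructor
  · induction y using Quotient.inductionOn with
    | h p =>
      rintro ⟨⟨n⟩, hn⟩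
      refine ⟨n, (Quotient.sound hn).trans ?_⟩
      clear hn
      induction n with
      | zero => rfl
      | succ k ih => show ZFSet.mk (PSet.insert _ _) = _; rw [natZF, ← ih]; rfl
  · rintro ⟨n, rfl⟩
    induction n with
    | zero => exact ZFSet.omega_zero
    | succ k ih => exact ZFSet.omega_succ ih

@[simp] theorem natZF_mem_omega (n : ℕ) : natZF n ∈ ZFSet.omega :=
  mem_omega_iff.2 ⟨n, rfl⟩

@[simp] theorem exists_mem_omega {P : ZFSet → Prop} :
    (∃ y ∈ ZFSet.omega, P y) ↔ ∃ n, P (natZF n) := by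
  simp [mem_omega_iff]

@[simp] theorem forall_mem_omega {P : ZFSet → Prop} :
    (∀ y ∈ ZFSet.omega, P y) ↔ ∀ n, P (natZF n) := by
  simp [mem_omega_iff]

theorem toSet_omega : ZFSet.omega.toSet = Set.range natZF := by
  ext y; exact mem_omega_iff.trans (by simp [eq_comm])

/-- A `Δ₀` description of `ω`; the last clause keeps `w` inside `ω` by `∈`-induction. -/
theorem eq_omega_iff {w : ZFSet} : w = ZFSet.omega ↔
    (∀ u ∈ w, ∀ z ∈ u, z ∈ w) ∧ ∅ ∈ w ∧ (∀ y ∈ w, insert y y ∈ w) ∧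
      ∀ y ∈ w, y = ∅ ∨ ∃ z ∈ y, y = insert z z := by
  constructor
  · rintro rfl
    refine ⟨?_, ZFSet.omega_zero, fun y => ZFSet.omega_succ, ?_⟩
    · simp only [forall_mem_omega, mem_natZF]
      rintro n z ⟨m, -, rfl⟩
      exact natZF_mem_omega m
    · simp only [forall_mem_omega]
      rintro (_ | n)
      exacts [.inl rfl, .inr ⟨natZF n, ZFSet.mem_insert _ _, rfl⟩]
  · rintro ⟨htrans, hzero, hsucc, hcases⟩
    have hnat : ∀ n, natZF n ∈ w := fun n => by
      induction n with
      | zero => exact hzero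
      | succ k ih => exact hsucc _ ih
    have hsub : ∀ y ∈ w, y ∈ ZFSet.omega := by
      intro y
      induction y using ZFSet.inductionOn with
      | h y ih =>
        intro hy
        rcases hcases y hy with rfl | ⟨z, hz, rfl⟩
        · exact ZFSet.omega_zero
        · exact ZFSet.omega_succ (ih z hz (htrans _ hy z hz))
    ext y
    exact ⟨hsub y, fun hy => (mem_omega_iff.1 hy).elim fun n hn => hn ▸ hnat n⟩

theorem mem_tcl_of_mem {x y : ZFSet} (h : y ∈ x) : y ∈ tcl x := .single h

theorem tcl_subset_of_mem {x y : ZFSet} (h : y ∈ x) : tcl y ⊆ tcl x :=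
  fun _ hz => hz.tail h

theorem tcl_subset_of_subset {x y : ZFSet} (h : y ⊆ x) : tcl y ⊆ tcl x := by
  rintro z (hz | ⟨hz, hzy⟩)
  exacts [.single (h hz), .tail hz (h hzy)]

theorem tcl_subset {x : ZFSet} {T : Set ZFSet} (hx : x.toSet ⊆ T)
    (hT : ∀ u ∈ T, ∀ z ∈ u, z ∈ T) : tcl x ⊆ T := by
  intro z hz
  induction hz using Relation.TransGen.head_induction_on with
  | single h => exact hx h
  | head h _ ih => exact hT _ ih _ h

theorem isTransClass_HSet (θ : ZFSet) : IsTransClass (HSet θ) :=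
  fun _ hx _ hy => (Cardinal.mk_le_mk_of_subset (tcl_subset_of_mem hy)).trans_lt hx

theorem mem_HSet_of_subset {θ x y : ZFSet} (hx : x ∈ HSet θ) (hy : y ⊆ x) : y ∈ HSet θ :=
  (Cardinal.mk_le_mk_of_subset (tcl_subset_of_subset hy)).trans_lt hx

theorem tcl_omega : tcl ZFSet.omega = ZFSet.omega.toSet := by
  refine subset_antisymm (tcl_subset subset_rfl ?_) fun y hy => mem_tcl_of_mem hy
  intro u hu z hz
  obtain ⟨n, rfl⟩ := mem_omega_iff.1 hu
  obtain ⟨m, -, rfl⟩ := mem_natZF.1 hz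
  exact natZF_mem_omega m

theorem aleph0_lt_card_of_omega_mem {θ : ZFSet} (h : ZFSet.omega ∈ HSet θ) : ℵ₀ < card θ := by
  refine lt_of_le_of_lt ?_ (show Cardinal.mk (tcl ZFSet.omega) < card θ from h)
  rw [tcl_omega, toSet_omega]
  exact Cardinal.aleph0_le_mk_iff.2 (Set.infinite_range_of_injective natZF_injective).to_subtype

namespace SF

variable {n : ℕ}

def ole (i j : Fin n) : SF n := (SF.mem i j).or (SF.eq i j)
def isEmpty (i : Fin n) : SF n := .ball i (.not (.eq 0 0))
def isSucc (w a : Fin n) : SF n :=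
  (SF.mem a w).and ((SF.ball w (SF.ole 0 a.succ)).and (SF.ball a (.mem 0 w.succ)))
def isUpair (t a b : Fin n) : SF n :=
  (SF.mem a t).and ((SF.mem b t).and (SF.ball t ((SF.eq 0 a.succ).or (SF.eq 0 b.succ))))
def isPair (p a b : Fin n) : SF n :=
  .bex p (.bex p.succ (((isUpair 1 a.succ.succ a.succ.succ).and
    (isUpair 0 a.succ.succ b.succ.succ)).and (isUpair p.succ.succ 1 0)))
def pairMem (F a d : Fin n) : SF n := .bex F (isPair 0 a.succ d.succ)
def pair2Mem (F a b d : Fin n) : SF n :=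
  .bex F (.bex 0 (.bex 0 ((isPair 0 a.succ.succ.succ b.succ.succ.succ).and
    (isPair 2 0 d.succ.succ.succ))))
def isInter (e a b : Fin n) : SF n :=
  (SF.ball e ((SF.mem 0 a.succ).and (SF.mem 0 b.succ))).and
    (SF.ball a ((SF.mem 0 b.succ).imp (SF.mem 0 e.succ)))
def interEq (a a' x : Fin n) : SF n :=
  (SF.ball a ((SF.mem 0 x.succ).imp (SF.mem 0 a'.succ))).and
    (SF.ball a' ((SF.mem 0 x.succ).imp (SF.mem 0 a.succ)))

namespace IsBounded

theorem ole (i j : Fin n) : (SF.ole i j).IsBounded := (mem i j).or (eq i j)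
theorem isEmpty (i : Fin n) : (SF.isEmpty i).IsBounded := .ball i (.not (.eq 0 0))
theorem isSucc (w a : Fin n) : (SF.isSucc w a).IsBounded :=
  (mem a w).and ((IsBounded.ball w (.ole 0 a.succ)).and (IsBounded.ball a (.mem 0 w.succ)))
theorem isUpair (t a b : Fin n) : (SF.isUpair t a b).IsBounded :=
  (mem a t).and ((mem b t).and (IsBounded.ball t ((eq 0 a.succ).or (eq 0 b.succ))))
theorem isPair (p a b : Fin n) : (SF.isPair p a b).IsBounded :=
  .bex p (.bex p.succ (((isUpair _ _ _).and (isUpair _ _ _)).and (isUpair _ _ _)))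
theorem pairMem (F a d : Fin n) : (SF.pairMem F a d).IsBounded := .bex F (isPair _ _ _)
theorem pair2Mem (F a b d : Fin n) : (SF.pair2Mem F a b d).IsBounded :=
  .bex F (.bex 0 (.bex 0 ((isPair _ _ _).and (isPair _ _ _))))
theorem isInter (e a b : Fin n) : (SF.isInter e a b).IsBounded :=
  (IsBounded.ball e ((mem _ _).and (mem _ _))).and (IsBounded.ball a ((mem _ _).imp (mem _ _)))
theorem interEq (a a' x : Fin n) : (SF.interEq a a' x).IsBounded :=
  (IsBounded.ball a ((mem _ _).imp (mem _ _))).and (IsBounded.ball a' ((mem _ _).imp (mem _ _)))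

end IsBounded

def isOmega (w : Fin n) : SF n :=
  (SF.ball w (SF.ball 0 (SF.mem 0 w.succ.succ))).and ((SF.bex w (isEmpty 0)).and
    ((SF.ball w (SF.bex w.succ (isSucc 0 1))).and
      (SF.ball w ((isEmpty 0).or (SF.bex 0 (isSucc 1 0))))))

theorem IsBounded.isOmega (w : Fin n) : (SF.isOmega w).IsBounded :=
  (IsBounded.ball w (IsBounded.ball 0 (.mem _ _))).and ((IsBounded.bex w (.isEmpty 0)).and
    ((IsBounded.ball w (.bex _ (.isSucc 0 1))).and
      (IsBounded.ball w ((IsBounded.isEmpty 0).or (.bex 0 (.isSucc 1 0))))))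

def enumerates (f w x : Fin n) : SF n :=
  (SF.ball w (SF.ball x.succ (SF.ball x.succ.succ ((SF.pairMem f.succ.succ.succ 2 1).imp
    ((SF.pairMem f.succ.succ.succ 2 0).imp (SF.eq 1 0)))))).and
  (SF.ball x (SF.bex w.succ (SF.pairMem f.succ.succ 0 1)))

theorem IsBounded.enumerates (f w x : Fin n) : (SF.enumerates f w x).IsBounded :=
  (IsBounded.ball _ (IsBounded.ball _ (IsBounded.ball _ ((IsBounded.pairMem _ _ _).imp
    ((IsBounded.pairMem _ _ _).imp (.eq _ _)))))).and
  (IsBounded.ball _ (.bex _ (IsBounded.pairMem _ _ _)))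

/-- Read in the context `[γ, lamp, ω, Dz, x]`. -/
def stabilizer : SF 5 :=
  (SF.mem 0 1).and (SF.ball 1 ((SF.ole 1 0).imp (SF.bex 3 (SF.ball 4 ((SF.ole 1 0).imp
    (SF.ball 6 (SF.ball 0 (SF.ball 0 ((SF.pair2Mem 9 3 5 0).imp
      (SF.ball 9 (SF.ball 0 (SF.ball 0 ((SF.pair2Mem 12 6 9 0).imp (SF.interEq 3 0 13))))))))))))))

theorem IsBounded.stabilizer : SF.stabilizer.IsBounded :=
  (mem _ _).and (IsBounded.ball _ ((ole _ _).imp (.bex _ (IsBounded.ball _ ((ole _ _).imp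
    (IsBounded.ball _ (IsBounded.ball _ (IsBounded.ball _ ((pair2Mem _ _ _ _).imp
      (IsBounded.ball _ (IsBounded.ball _ (IsBounded.ball _
        ((pair2Mem _ _ _ _).imp (interEq _ _ _))))))))))))))

end SF

def Enumerates (f w x : ZFSet) : Prop :=
  (∀ k ∈ w, ∀ t ∈ x, ∀ t' ∈ x, ZFSet.pair k t ∈ f → ZFSet.pair k t' ∈ f → t = t') ∧
    ∀ t ∈ x, ∃ k ∈ w, ZFSet.pair k t ∈ f

def CodesMatrix (lamp : ZFSet) (D : ℕ → ZFSet → ZFSet) (Dz : ZFSet) : Prop :=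
  (∀ (n : ℕ) (α : ZFSet), α ∈ lamp → ZFSet.pair (ZFSet.pair (natZF n) α) (D n α) ∈ Dz) ∧
    ∀ p, p ∈ Dz → ∃ (n : ℕ) (α : ZFSet), α ∈ lamp ∧
      p = ZFSet.pair (ZFSet.pair (natZF n) α) (D n α)

theorem CodesMatrix.pair_mem_iff {lamp Dz : ZFSet} {D : ℕ → ZFSet → ZFSet}
    (hDz : CodesMatrix lamp D Dz) {n : ℕ} {α d : ZFSet} :
    ZFSet.pair (ZFSet.pair (natZF n) α) d ∈ Dz ↔ α ∈ lamp ∧ d = D n α := by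
  refine ⟨fun h => ?_, fun ⟨hα, hd⟩ => hd ▸ hDz.1 n α hα⟩
  obtain ⟨k, β, hβ, he⟩ := hDz.2 _ h
  simp only [ZFSet.pair_inj, natZF_injective.eq_iff] at he
  obtain ⟨⟨rfl, rfl⟩, rfl⟩ := he
  exact ⟨hβ, rfl⟩

def IsStabilizer (D : ℕ → ZFSet → ZFSet) (lamp x γ : ZFSet) : Prop :=
  γ ∈ lamp ∧ ∀ α, α ∈ lamp → ole γ α → ∃ n : ℕ, ∀ m : ℕ, n ≤ m → D m α ∩ x = D m γ ∩ x

/-- The second coordinate of a pair in `F` is found in `⋃ ⋃ F`, so quantifying over it is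
bounded. -/
theorem forall_pair_mem_iff {F c : ZFSet} {P : ZFSet → Prop} :
    (∀ p ∈ F, ∀ u ∈ p, ∀ d ∈ u, ZFSet.pair c d ∈ F → P d) ↔
      ∀ d, ZFSet.pair c d ∈ F → P d :=
  ⟨fun h d hd => h _ hd {c, d} (by simp [ZFSet.pair]) d (by simp) hd, fun h _ _ _ _ d _ => h d⟩

section RealizeUniv

variable {n : ℕ} {v : Fin n → ZFSet}

@[simp] theorem realize_univ_ole {i j : Fin n} :
    Realize Set.univ (SF.ole i j) v ↔ ole (v i) (v j) := by
  simp [SF.ole, ole]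

@[simp] theorem realize_univ_isEmpty {i : Fin n} :
    Realize Set.univ (SF.isEmpty i) v ↔ v i = ∅ := by
  simp [SF.isEmpty, ZFSet.eq_empty]

@[simp] theorem realize_univ_isSucc {w a : Fin n} :
    Realize Set.univ (SF.isSucc w a) v ↔ v w = insert (v a) (v a) := by
  simp only [SF.isSucc, realize_and, realize_mem, realize_univ_ball, realize_univ_ole,
    Matrix.cons_val_zero, Matrix.cons_val_succ, ole]
  refine ⟨fun ⟨ha, hw, hsub⟩ => ZFSet.ext fun z => ?_, fun h => ?_⟩
  · rw [ZFSet.mem_insert_iff]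
    exact ⟨fun hz => (hw z hz).symm, fun hz => hz.elim (· ▸ ha) (hsub z)⟩
  · rw [h]
    simp +contextual [or_comm]

@[simp] theorem realize_univ_isUpair {t a b : Fin n} :
    Realize Set.univ (SF.isUpair t a b) v ↔ v t = {v a, v b} := by
  simp only [SF.isUpair, realize_and, realize_mem, realize_univ_ball, realize_or, realize_eq,
    Matrix.cons_val_zero, Matrix.cons_val_succ]
  refine ⟨fun ⟨ha, hb, ht⟩ => ZFSet.ext fun z => ?_, fun h => ?_⟩
  · rw [ZFSet.mem_pair]
    exact ⟨ht z, by rintro (rfl | rfl) <;> assumption⟩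
  · rw [h]
    simp

@[simp] theorem realize_univ_isPair {p a b : Fin n} :
    Realize Set.univ (SF.isPair p a b) v ↔ v p = ZFSet.pair (v a) (v b) := by
  simp only [SF.isPair, realize_univ_bex, Matrix.cons_val_succ, realize_and,
    realize_univ_isUpair, Matrix.cons_val_one, Matrix.cons_val_zero, ZFSet.pair_eq_singleton,
    existsAndEq, and_true, true_and]
  exact ⟨fun h => h.2.2, fun h => ⟨by simp [h, ZFSet.pair], by simp [h, ZFSet.pair], h⟩⟩

@[simp] theorem realize_univ_pairMem {F a d : Fin n} :
    Realize Set.univ (SF.pairMem F a d) v ↔ ZFSet.pair (v a) (v d) ∈ v F := by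
  simp [SF.pairMem]

@[simp] theorem realize_univ_pair2Mem {F a b d : Fin n} :
    Realize Set.univ (SF.pair2Mem F a b d) v ↔
      ZFSet.pair (ZFSet.pair (v a) (v b)) (v d) ∈ v F := by
  simp only [SF.pair2Mem, realize_univ_bex, Matrix.cons_val_zero, realize_and,
    realize_univ_isPair, Matrix.cons_val_succ, Matrix.cons_val, existsAndEq, true_and, and_true,
    exists_and_left, and_iff_left_iff_imp]
  exact fun _ => ⟨{ZFSet.pair (v a) (v b), v d}, by simp [ZFSet.pair]⟩

@[simp] theorem realize_univ_isInter {e a b : Fin n} :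
    Realize Set.univ (SF.isInter e a b) v ↔ v e = v a ∩ v b := by
  simp only [SF.isInter, realize_and, realize_univ_ball, realize_mem, realize_imp,
    Matrix.cons_val_succ, Matrix.cons_val_zero]
  refine ⟨fun ⟨he, ha⟩ => ZFSet.ext fun z => ?_, fun h => ?_⟩
  · rw [ZFSet.mem_inter]
    exact ⟨he z, fun hz => ha z hz.1 hz.2⟩
  · rw [h]
    simp +contextual

@[simp] theorem realize_univ_interEq {a a' x : Fin n} :
    Realize Set.univ (SF.interEq a a' x) v ↔ v a ∩ v x = v a' ∩ v x := by
  simp only [SF.interEq, realize_and, realize_univ_ball, realize_imp, realize_mem,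
    Matrix.cons_val_succ, Matrix.cons_val_zero]
  refine ⟨fun ⟨ha, ha'⟩ => ZFSet.ext fun z => ?_, fun h => ⟨fun z hz hx => ?_, fun z hz hx => ?_⟩⟩
  · simp only [ZFSet.mem_inter]
    exact ⟨fun hz => ⟨ha z hz.1 hz.2, hz.2⟩, fun hz => ⟨ha' z hz.1 hz.2, hz.2⟩⟩
  · exact (ZFSet.mem_inter.1 (h ▸ ZFSet.mem_inter.2 ⟨hz, hx⟩)).1
  · exact (ZFSet.mem_inter.1 (h.symm ▸ ZFSet.mem_inter.2 ⟨hz, hx⟩)).1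

@[simp] theorem realize_univ_isOmega {w : Fin n} :
    Realize Set.univ (SF.isOmega w) v ↔ v w = ZFSet.omega := by
  rw [eq_omega_iff]
  simp [SF.isOmega]

@[simp] theorem realize_univ_enumerates {f w x : Fin n} :
    Realize Set.univ (SF.enumerates f w x) v ↔ Enumerates (v f) (v w) (v x) := by
  simp [SF.enumerates, Enumerates]

end RealizeUniv

theorem realize_univ_stabilizer {lamp Dz x γ : ZFSet} {D : ℕ → ZFSet → ZFSet}
    (hDz : CodesMatrix lamp D Dz) :
    Realize Set.univ SF.stabilizer ![γ, lamp, ZFSet.omega, Dz, x] ↔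
      IsStabilizer D lamp x γ := by
  simp +contextual [SF.stabilizer, IsStabilizer, forall_pair_mem_iff, hDz.pair_mem_iff]

section Elementarity

variable {H M : Set ZFSet} {n : ℕ} {φ : SF (n + 1)} {v : Fin n → ZFSet}

theorem Prec.exists_mem_of_isBounded (hM : Prec M H) (hH : IsTransClass H)
    (hφ : φ.IsBounded) (hv : ∀ i, v i ∈ M)
    (h : ∃ w ∈ H, Realize Set.univ φ (Matrix.vecCons w v)) :
    ∃ w ∈ M, Realize Set.univ φ (Matrix.vecCons w v) := by
  have hvH : ∀ i, v i ∈ H := fun i => hM.1 (hv i)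
  obtain ⟨w, hwH, hw⟩ := h
  have hex : Realize M (.ex φ) v :=
    (hM.2 _ v hv).2 ⟨w, hwH, (realize_iff_realize_univ hH hφ (Fin.cases hwH hvH)).2 hw⟩
  obtain ⟨w', hw'M, hw'⟩ := hex
  refine ⟨w', hw'M, (realize_iff_realize_univ hH hφ (Fin.cases (hM.1 hw'M) hvH)).1 ?_⟩
  exact (hM.2 φ _ (Fin.cases hw'M hv)).1 hw'

theorem Prec.mem_of_isBounded_unique (hM : Prec M H) (hH : IsTransClass H)
    (hφ : φ.IsBounded) (hv : ∀ i, v i ∈ M) {t : ZFSet} (ht : t ∈ H)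
    (hφt : Realize Set.univ φ (Matrix.vecCons t v))
    (huniq : ∀ w, Realize Set.univ φ (Matrix.vecCons w v) → w = t) : t ∈ M := by
  obtain ⟨w, hwM, hw⟩ := hM.exists_mem_of_isBounded hH hφ hv ⟨t, ht, hφt⟩
  exact huniq w hw ▸ hwM

end Elementarity

theorem vecCons_mem {M : Set ZFSet} {n : ℕ} {a : ZFSet} {v : Fin n → ZFSet} (ha : a ∈ M)
    (hv : ∀ i, v i ∈ M) : ∀ i, Matrix.vecCons a v i ∈ M :=
  Fin.cases ha hv

theorem vecEmpty_mem (M : Set ZFSet) : ∀ i, (![] : Fin 0 → ZFSet) i ∈ M :=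
  fun i => i.elim0

section Closure

variable {H M : Set ZFSet} (hH : IsTransClass H) (hM : Prec M H) (hω : ZFSet.omega ∈ H)
include hH hM hω

theorem Prec.natZF_mem (n : ℕ) : natZF n ∈ M := by
  have hnatH : ∀ k, natZF k ∈ H := fun k => hH _ hω _ (natZF_mem_omega k)
  induction n with
  | zero =>
    refine hM.mem_of_isBounded_unique hH (.isEmpty 0) (vecEmpty_mem M) (hnatH 0) ?_ ?_ <;>
      simp [natZF]
  | succ k ih =>
    refine hM.mem_of_isBounded_unique hH (.isSucc 0 1) (vecCons_mem ih (vecEmpty_mem M))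
      (hnatH (k + 1)) ?_ ?_ <;>
      simp [natZF]

theorem Prec.omega_mem : ZFSet.omega ∈ M := by
  refine hM.mem_of_isBounded_unique hH (.isOmega 0) (vecEmpty_mem M) hω ?_ ?_ <;> simp

theorem Prec.entry_mem {lamp Dz γ : ZFSet} {D : ℕ → ZFSet → ZFSet}
    (hDz : CodesMatrix lamp D Dz) (hDzM : Dz ∈ M) (hγM : γ ∈ M) (hγ : γ ∈ lamp) (m : ℕ) :
    D m γ ∈ M := by
  have hentry := hDz.1 m γ hγ
  refine hM.mem_of_isBounded_unique hH (.pair2Mem 3 1 2 0)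
    (vecCons_mem (hM.natZF_mem hH hω m) (vecCons_mem hγM (vecCons_mem hDzM (vecEmpty_mem M))))
    (hH.snd_mem (hH _ (hM.1 hDzM) _ hentry)) ?_ ?_
  · simpa using hentry
  · simp [hDz.pair_mem_iff]

theorem Prec.exists_stabilizer_mem {lamp Dz x : ZFSet} {D : ℕ → ZFSet → ZFSet}
    (hDz : CodesMatrix lamp D Dz) (hlampM : lamp ∈ M) (hDzM : Dz ∈ M) (hxM : x ∈ M)
    (h : ∃ γ, IsStabilizer D lamp x γ) : ∃ γ ∈ M, IsStabilizer D lamp x γ := by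
  obtain ⟨γ, hγ⟩ := h
  have hγH : γ ∈ H := hH _ (hM.1 hlampM) γ hγ.1
  simp only [← realize_univ_stabilizer hDz] at hγ ⊢
  exact hM.exists_mem_of_isBounded hH .stabilizer
    (vecCons_mem hlampM (vecCons_mem (hM.omega_mem hH hω)
      (vecCons_mem hDzM (vecCons_mem hxM (vecEmpty_mem M))))) ⟨γ, hγH, hγ⟩

end Closure

theorem Prec.inter_mem {θ : ZFSet} {M : Set ZFSet} (hM : Prec M (HSet θ)) {a b : ZFSet}
    (ha : a ∈ M) (hb : b ∈ M) : a ∩ b ∈ M := by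
  refine hM.mem_of_isBounded_unique (isTransClass_HSet θ) (.isInter 0 1 2)
    (vecCons_mem ha (vecCons_mem hb (vecEmpty_mem M)))
    (mem_HSet_of_subset (hM.1 ha) fun _ h => (ZFSet.mem_inter.1 h).1) ?_ ?_ <;> simp

theorem exists_enumerates_mem_HSet {θ x : ZFSet} (hω : ZFSet.omega ∈ HSet θ)
    (hx : x ∈ HSet θ) (hxc : card x ≤ ℵ₀) : ∃ f ∈ HSet θ, Enumerates f ZFSet.omega x := by
  have : Countable x := Cardinal.mk_le_aleph0_iff.1 hxc
  obtain ⟨e, he⟩ := Countable.exists_injective_nat x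
  let f := ZFSet.range fun t : x => ZFSet.pair (natZF (e t)) t
  refine ⟨f, ?_, ⟨?_, fun t ht => ⟨natZF (e ⟨t, ht⟩), natZF_mem_omega _, by simpa [f] using ht⟩⟩⟩
  · let C : Set ZFSet := ⋃ t : x,
      {ZFSet.pair (natZF (e t)) t, ({natZF (e t)} : ZFSet), ({natZF (e t), t.1} : ZFSet)}
    have hC : C.Countable := Set.countable_iUnion fun _ => (Set.toFinite _).countable
    -- `C` holds the elements of `f` and theirs; everything further down is in `tcl ω ∪ tcl x`.
    have hsub : tcl f ⊆ C ∪ (tcl ZFSet.omega ∪ tcl x) := by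
      refine tcl_subset (fun u hu => ?_) ?_
      · obtain ⟨t, rfl⟩ := ZFSet.mem_range.1 hu
        exact .inl (Set.mem_iUnion.2 ⟨t, by simp⟩)
      rintro u (hu | hu | hu) z hz
      · obtain ⟨t, hu⟩ := Set.mem_iUnion.1 hu
        simp only [Set.mem_insert_iff, Set.mem_singleton_iff] at hu
        rcases hu with rfl | rfl | rfl
        · refine .inl (Set.mem_iUnion.2 ⟨t, ?_⟩)
          simp only [ZFSet.pair, ZFSet.mem_insert_iff, ZFSet.mem_singleton] at hz
          rcases hz with rfl | rfl <;> simp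
        · rw [ZFSet.mem_singleton.1 hz]
          exact .inr (.inl (mem_tcl_of_mem (natZF_mem_omega _)))
        · rcases ZFSet.mem_pair.1 hz with rfl | rfl
          · exact .inr (.inl (mem_tcl_of_mem (natZF_mem_omega _)))
          · exact .inr (.inr (mem_tcl_of_mem t.2))
      · exact .inr (.inl (.head hz hu))
      · exact .inr (.inr (.head hz hu))
    have hθ := aleph0_lt_card_of_omega_mem hω
    refine (Cardinal.mk_le_mk_of_subset hsub).trans_lt ((Cardinal.mk_union_le _ _).trans_lt ?_)
    refine Cardinal.add_lt_of_lt hθ.le (hC.le_aleph0.trans_lt hθ) ?_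
    exact (Cardinal.mk_union_le _ _).trans_lt (Cardinal.add_lt_of_lt hθ.le hω hx)
  · simp only [f, ZFSet.mem_range, ZFSet.pair_inj]
    rintro _ - _ _ _ _ ⟨s, hs, rfl⟩ ⟨s', hs', rfl⟩
    exact congrArg Subtype.val (he (natZF_injective (hs.trans hs'.symm)))

theorem Prec.subset_of_card_le_aleph0 {θ : ZFSet} {M : Set ZFSet} (hM : Prec M (HSet θ))
    (hω : ZFSet.omega ∈ HSet θ) {x : ZFSet} (hxM : x ∈ M) (hxc : card x ≤ ℵ₀) :
    x.toSet ⊆ M := by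
  have hH := isTransClass_HSet θ
  have hωM := hM.omega_mem hH hω
  obtain ⟨f, hfM, hf⟩ := hM.exists_mem_of_isBounded hH (.enumerates 0 1 2)
    (vecCons_mem hωM (vecCons_mem hxM (vecEmpty_mem M)))
    (by simpa using exists_enumerates_mem_HSet hω (hM.1 hxM) hxc)
  simp only [realize_univ_enumerates, Matrix.cons_val] at hf
  intro t ht
  obtain ⟨k, hk, hkt⟩ := hf.2 t ht
  obtain ⟨n, rfl⟩ := mem_omega_iff.1 hk
  refine hM.mem_of_isBounded_unique hH ((SF.IsBounded.mem 0 3).and (.pairMem 2 1 0))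
    (vecCons_mem (hM.natZF_mem hH hω n) (vecCons_mem hfM (vecCons_mem hxM (vecEmpty_mem M))))
    (hH _ (hM.1 hxM) t ht) ?_ ?_
  · simpa using ⟨ht, hkt⟩
  · simp only [realize_and, realize_mem, realize_univ_pairMem, Matrix.cons_val]
    exact fun w ⟨hw, hkw⟩ => hf.1 _ hk w hw t ht hkw hkt

theorem inter_eq_inter_of_subset {a b x y : ZFSet} (h : a ∩ x = b ∩ x) (hy : y ⊆ x) :
    a ∩ y = b ∩ y := by
  ext t
  have := congrArg (t ∈ ·) h
  simp only [ZFSet.mem_inter, eq_iff_iff] at this ⊢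
  exact ⟨fun ⟨ha, ht⟩ => ⟨(this.1 ⟨ha, hy ht⟩).1, ht⟩, fun ⟨hb, ht⟩ => ⟨(this.2 ⟨hb, hy ht⟩).1, ht⟩⟩

theorem covering_matrix_guessed_general (lam lamp : ZFSet)
    (homega : ZFSet.omega ∈ lam)
    (hlt : lam ∈ lamp)
    (D : ℕ → ZFSet → ZFSet) (hD : SCM lam lamp D)
    (θ : ZFSet)
    (M : Set ZFSet) (hM : Prec M (HSet θ))
    (hIU : IntUnb M)
    (hlampM : lamp ∈ M)
    (Dz : ZFSet) (hDzM : Dz ∈ M)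
    (hDz : (∀ (n : ℕ) (α : ZFSet), α ∈ lamp →
        ZFSet.pair (ZFSet.pair (natZF n) α) (D n α) ∈ Dz) ∧
      ∀ p, p ∈ Dz → ∃ (n : ℕ) (α : ZFSet), α ∈ lamp ∧
        p = ZFSet.pair (ZFSet.pair (natZF n) α) (D n α))
    (σ : ZFSet) (hσ : σ ∈ lamp)
    (hσub : ∀ x, x ∈ M → x ∈ lamp → ole x σ) :
    ∃ n : ℕ, ∀ x : ZFSet, x ∈ M → x ⊆ lamp → card x ≤ ℵ₀ →
      ∀ m : ℕ, n ≤ m → (D m σ ∩ x) ∈ M := by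
  have hH := isTransClass_HSet θ
  have hω : ZFSet.omega ∈ HSet θ := hH _ (hH _ (hM.1 hlampM) _ hlt) _ homega
  by_contra! hbad
  choose xs hxsM hxsl hxsc ms hms hbad using hbad
  obtain ⟨z, hzM, hzc, hz⟩ := hIU (⋃ n, (xs n).toSet)
    (Set.iUnion_subset fun n => hM.subset_of_card_le_aleph0 hω (hxsM n) (hxsc n))
    (Set.countable_iUnion fun n => Set.countable_coe_iff.1 (Cardinal.mk_le_aleph0_iff.1 (hxsc n)))
  have hxs : ∀ n, xs n ⊆ z ∩ lamp := fun n t ht =>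
    ZFSet.mem_inter.2 ⟨hz (Set.mem_iUnion.2 ⟨n, ht⟩), hxsl n ht⟩
  have hxc : card (z ∩ lamp) ≤ ℵ₀ :=
    (Cardinal.mk_le_mk_of_subset fun t ht => (ZFSet.mem_inter.1 ht).1).trans hzc
  obtain ⟨-, -, -, hstab, -⟩ := hD
  obtain ⟨γ, hγM, hγl, hγ⟩ := hM.exists_stabilizer_mem hH hω hDz hlampM hDzM
    (hM.inter_mem hzM hlampM) (hstab _ (fun t ht => (ZFSet.mem_inter.1 ht).2) hxc)
  obtain ⟨k, hk⟩ := hγ σ hσ (hσub γ hγM hγl)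
  apply hbad k
  rw [inter_eq_inter_of_subset (hk _ (hms k)) (hxs k)]
  exact hM.inter_mem (hM.entry_mem hH hω hDz hDzM hγM hγl _) (hxsM k)

/-- Lemma 7.8: for an `ℵ₁`-internally unbounded `M ≺ H_θ` of size `ℵ₁` containing
a strong covering matrix `𝒟` on `λ⁺`, there is `n < ω` with
`D(m, sup(M ∩ λ⁺)) ∩ x ∈ M` for all countable `x ∈ M`, `x ⊆ λ⁺` and all `m ≥ n`. -/
theorem covering_matrix_guessed (lam lamp : ZFSet)
    (hlam : IsCard lam) (homega : ZFSet.omega ∈ lam)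
    (hcof : ∃ s : Set ZFSet, CofinalSetIn s lam ∧ s.Countable)
    (hlamp : IsCard lamp) (hlt : lam ∈ lamp)
    (hsucc : ∀ μ : ZFSet, IsCard μ → lam ∈ μ → ole lamp μ)
    (D : ℕ → ZFSet → ZFSet) (hD : SCM lam lamp D)
    (θ : ZFSet) (hθ : IsRegCard θ) (hlampθ : ZFSet.powerset lamp ∈ HSet θ)
    (M : Set ZFSet) (hM : Prec M (HSet θ))
    (hMsize : Cardinal.mk M = Cardinal.aleph 1) (hIU : IntUnb M)
    (hlampM : lamp ∈ M)
    (Dz : ZFSet) (hDzM : Dz ∈ M)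
    (hDz : (∀ (n : ℕ) (α : ZFSet), α ∈ lamp →
        ZFSet.pair (ZFSet.pair (natZF n) α) (D n α) ∈ Dz) ∧
      ∀ p, p ∈ Dz → ∃ (n : ℕ) (α : ZFSet), α ∈ lamp ∧
        p = ZFSet.pair (ZFSet.pair (natZF n) α) (D n α))
    (σ : ZFSet) (hσord : IsOrd σ) (hσ : σ ∈ lamp)
    (hσub : ∀ x, x ∈ M → x ∈ lamp → ole x σ)
    (hσlub : ∀ τ : ZFSet, IsOrd τ → (∀ x, x ∈ M → x ∈ lamp → ole x τ) → ole σ τ) :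
    ∃ n : ℕ, ∀ x : ZFSet, x ∈ M → x ⊆ lamp → card x ≤ ℵ₀ →
      ∀ m : ℕ, n ≤ m → (D m σ ∩ x) ∈ M :=
  covering_matrix_guessed_general lam lamp homega hlt D hD θ M hM hIU hlampM Dz hDzM hDz σ hσ hσub

end GuessingModels
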